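/- For every positive integer k, the language L_k specified by the regular expression ([a^k])^*([a^{k-1}b]b + ba)b^*, i.e. L_k = { a^{km} a^{k-1} b b b^n : m,n ≥ 0 } ∪ { a^{km} b a b^n : m,n ≥ 0 }, is 2-block deterministic; in particular it is specified by the 2-block deterministic expression (a^{k-1}([aa]a^{k-2})^*([ab]a + bb) + ba)b^*. -/

import Mathlib

namespace BD

/-- Language-level First: symbols beginning some word of `L`. -/
def LFirst {α : Type*} (L : Set (List α)) : Set α := {x | ∃ w, x :: w ∈ L}

/-- Language-level Last. -/
def LLast {α : Type*} (L : Set (List α)) : Set α := {x | ∃ w, w ++ [x] ∈ L}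

/-- Language-level Follow. -/
def LFollow {α : Type*} (L : Set (List α)) (x : α) : Set α :=
  {y | ∃ u v, u ++ x :: y :: v ∈ L}

/-- The list of symbol occurrences of a regular expression. -/
def rchars {α : Type*} : RegularExpression α → List α
  | .zero => []
  | .epsilon => []
  | .char a => [a]
  | .plus p q => rchars p ++ rchars q
  | .comp p q => rchars p ++ rchars q
  | .star p => rchars p

/-- The Glushkov automaton of a (marked) language `L` over positions `π`,
with labelling map `f` dropping the marks. States are `Option π`, `none` being initial. -/
def glushkov {π β : Type*} (L : Set (List π)) (f : π → β) : NFA β (Option π) where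
  step q b :=
    match q with
    | none => {s | ∃ y, y ∈ LFirst L ∧ f y = b ∧ s = some y}
    | some x => {s | ∃ y, y ∈ LFollow L x ∧ f y = b ∧ s = some y}
  start := {none}
  accept := {s | ∃ y, y ∈ LLast L ∧ s = some y} ∪ {s | s = none ∧ [] ∈ L}

/-- Determinism of an automaton. -/
def Det {β σ : Type*} (A : NFA β σ) : Prop :=
  (∃ i, A.start = {i}) ∧
  ∀ p b q₁ q₂, q₁ ∈ A.step p b → q₂ ∈ A.step p b → q₁ = q₂

/-- `k`-lookahead determinism of an automaton. -/
def kLA {β σ : Type*} (A : NFA β σ) (k : ℕ) : Prop :=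
  (∃ i, A.start = {i}) ∧
  ∀ p b q₁ q₂, q₁ ∈ A.step p b → q₂ ∈ A.step p b → q₁ ≠ q₂ →
    ∀ w : List β, w.length = k - 1 → A.evalFrom {q₁} w = ∅ ∨ A.evalFrom {q₂} w = ∅

/-- `k`-block determinism of a block automaton (labels are nonempty words of length ≤ k,
single initial state, no outgoing label a prefix of another outgoing label). -/
def kBD {γ σ : Type*} (A : NFA (List γ) σ) (k : ℕ) : Prop :=
  (∃ i, A.start = {i}) ∧
  (∀ q b, (A.step q b).Nonempty → 1 ≤ b.length ∧ b.length ≤ k) ∧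
  (∀ p b₁ b₂ q₁ q₂, q₁ ∈ A.step p b₁ → q₂ ∈ A.step p b₂ →
      (b₁, q₁) ≠ (b₂, q₂) → ¬ b₁ <+: b₂)

/-- A language over `γ` is `k`-block deterministic if it is specified by a block
regular expression (given by its marked version `E` over positions `π` together with
the dropping map `f` to blocks) whose Glushkov automaton is `k`-block deterministic. -/
def IsKBlockDet {γ : Type} (L : Set (List γ)) (k : ℕ) : Prop :=
  ∃ (π : Type) (E : RegularExpression π) (f : π → List γ),
    (rchars E).Nodup ∧
    kBD (glushkov E.matches' f) k ∧
    L = {w | ∃ ws ∈ E.matches', (ws.map f).flatten = w}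

/-- A language is `k`-lookahead deterministic if specified by a regular expression
whose Glushkov automaton is `k`-lookahead deterministic. -/
def IsKLookaheadDet {γ : Type} (L : Set (List γ)) (k : ℕ) : Prop :=
  ∃ (π : Type) (E : RegularExpression π) (f : π → γ),
    (rchars E).Nodup ∧
    kLA (glushkov E.matches' f) k ∧
    L = {w | ∃ ws ∈ E.matches', ws.map f = w}

/-- A language is one-unambiguous if specified by a regular expression with
deterministic Glushkov automaton. -/
def IsOneUnambiguous {γ : Type} (L : Set (List γ)) : Prop :=
  ∃ (π : Type) (E : RegularExpression π) (f : π → γ),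
    (rchars E).Nodup ∧
    Det (glushkov E.matches' f) ∧
    L = {w | ∃ ws ∈ E.matches', ws.map f = w}

/-- Reachability in an automaton. -/
def Reach {β σ : Type*} (A : NFA β σ) (p q : σ) : Prop := ∃ w, q ∈ A.evalFrom {p} w

/-- `O` is an orbit (strongly connected component) of `A`. -/
def IsOrbit {β σ : Type*} (A : NFA β σ) (O : Set σ) : Prop :=
  ∃ q, O = {p | Reach A p q ∧ Reach A q p}

/-- A non-trivial orbit: one containing a cycle. -/
def NonTrivial {β σ : Type*} (A : NFA β σ) (O : Set σ) : Prop :=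
  ∃ p ∈ O, ∃ w : List β, w ≠ [] ∧ p ∈ A.evalFrom {p} w

/-- In-gate of an orbit. -/
def InGate {β σ : Type*} (A : NFA β σ) (O : Set σ) (q : σ) : Prop :=
  q ∈ O ∧ (q ∈ A.start ∨ ∃ p ∉ O, ∃ b, q ∈ A.step p b)

/-- Out-gate of an orbit. -/
def OutGate {β σ : Type*} (A : NFA β σ) (O : Set σ) (q : σ) : Prop :=
  q ∈ O ∧ (q ∈ A.accept ∨ ∃ p ∉ O, ∃ b, p ∈ A.step q b)

end BD

namespace BD

inductive AB : Type | a | b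
deriving DecidableEq

open AB in
/-- `L_k = { a^{km} a^{k-1} b b b^n } ∪ { a^{km} b a b^n }`. -/
def L0 (k : ℕ) : Set (List AB) :=
  {w | ∃ m n : ℕ,
    w = List.replicate (k * m) a ++ List.replicate (k - 1) a ++ [b, b] ++ List.replicate n b ∨
    w = List.replicate (k * m) a ++ [b, a] ++ List.replicate n b}



open Computability RegularExpression






inductive P : Type
  | A (i : ℕ) | Q | R (i : ℕ) | S | T | U | V | W | X
deriving DecidableEq

def f : P → List AB
  | .A _ => [.a] | .Q => [.a, .a] | .R _ => [.a] | .S => [.a, .b] | .T => [.a]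
  | .U => [.b, .b] | .V => [.b, .a] | .W => [.b] | .X => [.a]

def catList : List P → RegularExpression P
  | [] => 1
  | x :: xs => RegularExpression.char x * catList xs

lemma rchars_mul {α : Type*} (p q : RegularExpression α) :
    rchars (p * q) = rchars p ++ rchars q := rfl

lemma rchars_add {α : Type*} (p q : RegularExpression α) :
    rchars (p + q) = rchars p ++ rchars q := rfl

lemma rchars_catList (l : List P) : rchars (catList l) = l := by
  induction l with
  | nil => rfl
  | cons x xs ih => rw [catList, rchars_mul, ih]; rfl

lemma matches'_catList (l : List P) : (catList l).matches' = {l} := by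
  induction l with
  | nil =>
    ext w
    simp only [catList, RegularExpression.matches'_epsilon, Language.mem_one]
    exact ⟨fun h => h, fun h => h⟩
  | cons x xs ih =>
    ext w
    simp only [catList, RegularExpression.matches'_mul, RegularExpression.matches'_char, ih,
      Language.mem_mul, Set.mem_singleton_iff]
    constructor
    · rintro ⟨u, rfl, v, rfl, rfl⟩; rfl
    · rintro rfl; exact ⟨[x], rfl, xs, rfl, rfl⟩

lemma mem_kstar_singleton {α : Type*} (l x : List α) :
    x ∈ (({l} : Language α)∗ : Language α) ↔ ∃ m, x = (List.replicate m l).flatten := by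
  rw [Language.mem_kstar]
  constructor
  · rintro ⟨L, rfl, hL⟩
    refine ⟨L.length, ?_⟩
    congr 1
    exact List.eq_replicate_of_mem fun y hy => hL y hy
  · rintro ⟨m, rfl⟩
    exact ⟨List.replicate m l, rfl, fun y hy => by rw [List.eq_of_mem_replicate hy]; exact rfl⟩



lemma follow_chain {π : Type} {L : Set (List π)} {R : π → π → Prop}
    (h : ∀ w ∈ L, List.Chain' R w) {x y : π} (hy : y ∈ LFollow L x) : R x y := by
  obtain ⟨u, v, huv⟩ := hy
  have hinf : [x, y] <:+: u ++ x :: y :: v := ⟨u, v, by simp⟩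
  exact List.isChain_pair.mp ((h _ huv).infix hinf)

lemma kBD_of {L : Set (List P)} (R : P → P → Prop) (F : Set P)
    (hchain : ∀ w ∈ L, List.Chain' R w)
    (hfirst : ∀ x, x ∈ LFirst L → x ∈ F)
    (hF : ∀ y₁ ∈ F, ∀ y₂ ∈ F, y₁ ≠ y₂ → ¬ f y₁ <+: f y₂)
    (hR : ∀ x y₁ y₂, R x y₁ → R x y₂ → y₁ ≠ y₂ → ¬ f y₁ <+: f y₂) :
    kBD (glushkov L f) 2 := by
  refine ⟨⟨none, rfl⟩, ?_, ?_⟩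
  · rintro q b ⟨s, hs⟩
    match q with
    | none =>
      obtain ⟨y, -, rfl, rfl⟩ := hs
      cases y <;> simp [f]
    | some x =>
      obtain ⟨y, -, rfl, rfl⟩ := hs
      cases y <;> simp [f]
  · intro p b₁ b₂ q₁ q₂ h₁ h₂ hne
    match p with
    | none =>
      obtain ⟨y₁, hy₁, rfl, rfl⟩ := h₁
      obtain ⟨y₂, hy₂, rfl, rfl⟩ := h₂
      have : y₁ ≠ y₂ := by rintro rfl; exact hne rfl
      exact hF y₁ (hfirst y₁ hy₁) y₂ (hfirst y₂ hy₂) this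
    | some x =>
      obtain ⟨y₁, hy₁, rfl, rfl⟩ := h₁
      obtain ⟨y₂, hy₂, rfl, rfl⟩ := h₂
      have : y₁ ≠ y₂ := by rintro rfl; exact hne rfl
      exact hR x y₁ y₂ (follow_chain hchain hy₁) (follow_chain hchain hy₂) this


lemma chain'_rep {α : Type*} {Rr : α → α → Prop} (c : α) (h : Rr c c) :
    ∀ n, List.Chain' Rr (List.replicate n c)
  | 0 => List.isChain_nil
  | n+1 => by
    show List.IsChain _ _; rw [List.replicate_succ, List.isChain_cons]
    refine ⟨fun y hy => ?_, chain'_rep c h n⟩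
    cases n with
    | zero => simp at hy
    | succ n => rw [List.replicate_succ, List.head?_cons, Option.mem_some_iff] at hy; subst hy; exact h

lemma head?_rep {α : Type*} {c y : α} {n : ℕ} (hy : y ∈ (List.replicate n c).head?) : y = c := by
  cases n with
  | zero => simp at hy
  | succ n => rw [List.replicate_succ, List.head?_cons, Option.mem_some_iff] at hy; exact hy.symm

lemma flatten_rep {α : Type*} (c : α) : ∀ m, (List.replicate m [c]).flatten = List.replicate m c
  | 0 => rfl
  | m+1 => by rw [List.replicate_succ, List.replicate_succ, List.flatten_cons, flatten_rep c m]; rfl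

def E1 : RegularExpression P := (char .X).star * (char .U + char .V) * (char .W).star

lemma mem_E1 (w : List P) : w ∈ E1.matches' ↔
    ∃ m n t, (t = P.U ∨ t = P.V) ∧ w = List.replicate m P.X ++ t :: List.replicate n P.W := by
  simp only [E1, matches'_mul, matches'_add, matches'_star, matches'_char, Language.mem_mul,
    Language.mem_add]
  constructor
  · rintro ⟨u, ⟨u₁, h₁, t, ht, rfl⟩, v, hv, rfl⟩
    rw [mem_kstar_singleton] at h₁ hv
    obtain ⟨m, rfl⟩ := h₁
    obtain ⟨n, rfl⟩ := hv
    have ht' : t = [P.U] ∨ t = [P.V] := by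
      rcases ht with h | h <;> [left; right] <;> exact h
    rcases ht' with rfl | rfl
    · exact ⟨m, n, P.U, Or.inl rfl, by rw [flatten_rep, flatten_rep]; simp⟩
    · exact ⟨m, n, P.V, Or.inr rfl, by rw [flatten_rep, flatten_rep]; simp⟩
  · rintro ⟨m, n, t, ht, rfl⟩
    refine ⟨List.replicate m P.X ++ [t], ⟨List.replicate m P.X, ?_, [t], ?_, rfl⟩,
      List.replicate n P.W, ?_, by simp⟩
    · rw [mem_kstar_singleton]; exact ⟨m, (flatten_rep _ m).symm⟩
    · rcases ht with rfl | rfl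
      · left; rfl
      · right; rfl
    · rw [mem_kstar_singleton]; exact ⟨n, (flatten_rep _ n).symm⟩

def Radj1 : P → P → Prop
  | .X, y => y = .X ∨ y = .U ∨ y = .V
  | .U, y => y = .W
  | .V, y => y = .W
  | .W, y => y = .W
  | _, _ => False

lemma chain1 : ∀ w ∈ E1.matches', List.Chain' Radj1 w := by
  intro w hw
  rw [mem_E1] at hw
  obtain ⟨m, n, t, ht, rfl⟩ := hw
  show List.IsChain _ _; rw [List.isChain_append]
  refine ⟨chain'_rep (Rr := Radj1) P.X (Or.inl rfl) m, ?_, ?_⟩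
  · rw [List.isChain_cons]
    refine ⟨fun y hy => ?_, chain'_rep (Rr := Radj1) P.W rfl n⟩
    have := head?_rep hy
    subst this
    rcases ht with rfl | rfl <;> exact rfl
  · intro x hx y hy
    have hx' : x = P.X := by
      have := List.mem_of_mem_getLast? hx
      exact List.eq_of_mem_replicate this
    subst hx'
    rw [List.head?_cons, Option.mem_some_iff] at hy
    subst hy
    rcases ht with rfl | rfl
    · exact Or.inr (Or.inl rfl)
    · exact Or.inr (Or.inr rfl)

lemma first1 : ∀ x, x ∈ LFirst E1.matches' → x = P.X ∨ x = P.U ∨ x = P.V := by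
  rintro x ⟨w, hw⟩
  replace hw := (mem_E1 _).mp hw
  obtain ⟨m, n, t, ht, hw⟩ := hw
  cases m with
  | zero =>
    simp only [List.replicate, List.nil_append, List.cons.injEq] at hw
    rcases ht with rfl | rfl
    · exact Or.inr (Or.inl hw.1)
    · exact Or.inr (Or.inr hw.1)
  | succ m =>
    rw [List.replicate_succ, List.cons_append, List.cons.injEq] at hw
    exact Or.inl hw.1

theorem case1 : IsKBlockDet (L0 1) 2 := by
  refine ⟨P, E1, f, ?_, ?_, ?_⟩
  · have : rchars E1 = [P.X, P.U, P.V, P.W] := rfl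
    rw [this]; decide
  · refine kBD_of Radj1 {y | y = P.X ∨ y = P.U ∨ y = P.V} chain1 first1 ?_ ?_
    · rintro y₁ (rfl | rfl | rfl) y₂ (rfl | rfl | rfl) hne <;> first | (exact absurd rfl hne) | decide
    · intro x y₁ y₂ h₁ h₂ hne
      cases x <;> simp only [Radj1] at h₁ h₂
      all_goals first
        | (subst h₁; subst h₂; exact absurd rfl hne)
        | (rcases h₁ with rfl | rfl | rfl <;> rcases h₂ with rfl | rfl | rfl <;>
            first | (exact absurd rfl hne) | decide)
  · ext w
    simp only [L0, Set.mem_setOf_eq, mem_E1]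
    constructor
    · rintro ⟨m, n, h | h⟩
      · refine ⟨List.replicate m P.X ++ P.U :: List.replicate n P.W, ⟨m, n, P.U, Or.inl rfl, rfl⟩, ?_⟩
        rw [h]; simp [f, flatten_rep, List.map_replicate]
      · refine ⟨List.replicate m P.X ++ P.V :: List.replicate n P.W, ⟨m, n, P.V, Or.inr rfl, rfl⟩, ?_⟩
        rw [h]; simp [f, flatten_rep, List.map_replicate]
    · rintro ⟨ws, ⟨m, n, t, ht, rfl⟩, rfl⟩
      refine ⟨m, n, ?_⟩
      rcases ht with rfl | rfl
      · left; simp [f, flatten_rep, List.map_replicate]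
      · right; simp [f, flatten_rep, List.map_replicate]


variable {k : ℕ}

def As (k : ℕ) : List P := (List.range (k-1)).map P.A
def Rs (k : ℕ) : List P := (List.range (k-2)).map P.R
def cyc (k : ℕ) : List P := P.Q :: Rs k

def cycN (k : ℕ) : ℕ → List P
  | 0 => []
  | m+1 => cyc k ++ cycN k m

def Ek (k : ℕ) : RegularExpression P :=
  (catList (As k) * (catList (cyc k)).star * (char .S * char .T + char .U) + char .V)
    * (char .W).star

lemma flatten_rep_cyc : ∀ m, (List.replicate m (cyc k)).flatten = cycN k m
  | 0 => rfl
  | m+1 => by rw [List.replicate_succ, List.flatten_cons, flatten_rep_cyc m]; rfl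

lemma mem_Ek (w : List P) : w ∈ (Ek k).matches' ↔
    ∃ m n, w = As k ++ cycN k m ++ P.S :: P.T :: List.replicate n P.W ∨
           w = As k ++ cycN k m ++ P.U :: List.replicate n P.W ∨
           w = P.V :: List.replicate n P.W := by
  simp only [Ek, matches'_mul, matches'_add, matches'_star, matches'_char, matches'_catList,
    Language.mem_mul, Language.mem_add]
  constructor
  · rintro ⟨u, hu, v, hv, rfl⟩
    rw [mem_kstar_singleton] at hv
    obtain ⟨n, rfl⟩ := hv
    rcases hu with ⟨p, ⟨x, hx, y, hy, rfl⟩, z, hz, rfl⟩ | hV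
    · replace hx : x = As k := hx
      rw [mem_kstar_singleton] at hy
      obtain ⟨m, rfl⟩ := hy
      subst hx
      rcases hz with ⟨s1, hs1, s2, hs2, rfl⟩ | hU
      · replace hs1 : s1 = [P.S] := hs1
        replace hs2 : s2 = [P.T] := hs2
        subst hs1; subst hs2
        refine ⟨m, n, Or.inl ?_⟩
        rw [flatten_rep_cyc, flatten_rep]
        simp
      · replace hU : z = [P.U] := hU
        subst hU
        refine ⟨m, n, Or.inr (Or.inl ?_)⟩
        rw [flatten_rep_cyc, flatten_rep]
        simp
    · replace hV : u = [P.V] := hV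
      subst hV
      exact ⟨0, n, Or.inr (Or.inr (by rw [flatten_rep]; simp))⟩
  · rintro ⟨m, n, rfl | rfl | rfl⟩
    · refine ⟨As k ++ cycN k m ++ [P.S, P.T], Or.inl ⟨As k ++ cycN k m,
        ⟨As k, rfl, cycN k m, ?_, rfl⟩, [P.S, P.T], Or.inl ⟨[P.S], rfl, [P.T], rfl, rfl⟩, rfl⟩,
        List.replicate n P.W, ?_, by simp⟩
      · rw [mem_kstar_singleton]; exact ⟨m, (flatten_rep_cyc m).symm⟩
      · rw [mem_kstar_singleton]; exact ⟨n, (flatten_rep _ n).symm⟩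
    · refine ⟨As k ++ cycN k m ++ [P.U], Or.inl ⟨As k ++ cycN k m,
        ⟨As k, rfl, cycN k m, ?_, rfl⟩, [P.U], Or.inr rfl, rfl⟩,
        List.replicate n P.W, ?_, by simp⟩
      · rw [mem_kstar_singleton]; exact ⟨m, (flatten_rep_cyc m).symm⟩
      · rw [mem_kstar_singleton]; exact ⟨n, (flatten_rep _ n).symm⟩
    · refine ⟨[P.V], Or.inr rfl, List.replicate n P.W, ?_, by simp⟩
      rw [mem_kstar_singleton]; exact ⟨n, (flatten_rep _ n).symm⟩

def Radj (k : ℕ) : P → P → Prop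
  | .A i, y => (i + 2 < k ∧ y = .A (i+1)) ∨ (i + 2 = k ∧ (y = .Q ∨ y = .S ∨ y = .U))
  | .Q, y => (k = 2 ∧ (y = .Q ∨ y = .S ∨ y = .U)) ∨ (3 ≤ k ∧ y = .R 0)
  | .R i, y => (i + 3 < k ∧ y = .R (i+1)) ∨ (i + 3 = k ∧ (y = .Q ∨ y = .S ∨ y = .U))
  | .S, y => y = .T
  | .T, y => y = .W
  | .U, y => y = .W
  | .V, y => y = .W
  | .W, y => y = .W
  | .X, _ => False

lemma chain'_As (hk : 2 ≤ k) : List.Chain' (Radj k) (As k) := by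
  show List.IsChain _ _; rw [As, List.isChain_map]
  have h1 : k - 1 = (k - 2) + 1 := by omega
  rw [h1, List.isChain_range_succ]
  intro m hm
  exact Or.inl ⟨by omega, rfl⟩

lemma chain'_cyc (hk : 2 ≤ k) : List.Chain' (Radj k) (cyc k) := by
  show List.IsChain _ _; rw [cyc, Rs, List.isChain_cons]
  constructor
  · intro y hy
    rcases Nat.lt_or_ge k 3 with h3 | h3
    · have : k - 2 = 0 := by omega
      rw [this] at hy; simp at hy
    · have : k - 2 = (k - 3) + 1 := by omega
      rw [this, List.range_succ_eq_map] at hy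
      simp only [List.map_cons, List.head?_cons, Option.mem_some_iff] at hy
      exact Or.inr ⟨h3, hy.symm⟩
  · rw [List.isChain_map]
    rcases Nat.lt_or_ge k 3 with h3 | h3
    · have : k - 2 = 0 := by omega
      rw [this]; exact List.isChain_nil
    · have : k - 2 = (k - 3) + 1 := by omega
      rw [this, List.isChain_range_succ]
      intro m hm
      exact Or.inl ⟨by omega, rfl⟩

lemma As_last (hk : 2 ≤ k) : ∀ x ∈ (As k).getLast?, ∀ y,
    (y = P.Q ∨ y = P.S ∨ y = P.U) → Radj k x y := by
  have h1 : k - 1 = (k - 2) + 1 := by omega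
  rw [As, h1, List.range_succ, List.map_append]
  intro x hx y hy
  rw [List.map_cons, List.map_nil, List.getLast?_concat, Option.mem_some_iff] at hx
  subst hx
  exact Or.inr ⟨by omega, hy⟩

lemma cyc_last (hk : 2 ≤ k) : ∀ x ∈ (cyc k).getLast?, ∀ y,
    (y = P.Q ∨ y = P.S ∨ y = P.U) → Radj k x y := by
  intro x hx y hy
  rcases Nat.lt_or_ge k 3 with h3 | h3
  · have h2 : k = 2 := by omega
    have : cyc k = [P.Q] := by rw [cyc, Rs, h2]; rfl
    rw [this] at hx
    simp only [List.getLast?_singleton, Option.mem_some_iff] at hx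
    subst hx
    exact Or.inl ⟨h2, hy⟩
  · have he : k - 2 = (k - 3) + 1 := by omega
    have : cyc k = (P.Q :: (List.range (k-3)).map P.R) ++ [P.R (k-3)] := by
      rw [cyc, Rs, he, List.range_succ, List.map_append]; rfl
    rw [this, List.getLast?_concat, Option.mem_some_iff] at hx
    subst hx
    exact Or.inr ⟨by omega, hy⟩

lemma chain_core (hk : 2 ≤ k) (s : List P) (hs : List.Chain' (Radj k) s)
    (hh : ∀ y ∈ s.head?, y = P.Q ∨ y = P.S ∨ y = P.U) :
    ∀ m, List.Chain' (Radj k) (cycN k m ++ s) ∧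
      ∀ y ∈ (cycN k m ++ s).head?, y = P.Q ∨ y = P.S ∨ y = P.U
  | 0 => by rw [cycN, List.nil_append]; exact ⟨hs, hh⟩
  | m+1 => by
    obtain ⟨ih1, ih2⟩ := chain_core hk s hs hh m
    rw [cycN, List.append_assoc]
    constructor
    · show List.IsChain _ _; rw [List.isChain_append]
      exact ⟨chain'_cyc hk, ih1, fun x hx y hy => cyc_last hk x hx y (ih2 y hy)⟩
    · intro y hy
      rw [cyc, List.cons_append, List.head?_cons, Option.mem_some_iff] at hy
      subst hy
      exact Or.inl rfl

lemma chain2 (hk : 2 ≤ k) : ∀ w ∈ (Ek k).matches', List.Chain' (Radj k) w := by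
  intro w hw
  rw [mem_Ek] at hw
  obtain ⟨m, n, hw | hw | hw⟩ := hw
  case inr.inr =>
    subst hw
    show List.IsChain _ _; rw [List.isChain_cons]
    exact ⟨fun y hy => (head?_rep hy : y = P.W) ▸ rfl, chain'_rep (Rr := Radj k) P.W rfl n⟩
  all_goals {
    subst hw
    show List.IsChain _ _; rw [List.append_assoc, List.isChain_append]
    have hts : List.Chain' (Radj k) (P.S :: P.T :: List.replicate n P.W) := by
      show List.IsChain _ _; rw [List.isChain_cons_cons, List.isChain_cons]
      exact ⟨rfl, fun y hy => (head?_rep hy : y = P.W) ▸ rfl,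
        chain'_rep (Rr := Radj k) P.W rfl n⟩
    have htu : List.Chain' (Radj k) (P.U :: List.replicate n P.W) := by
      show List.IsChain _ _; rw [List.isChain_cons]
      exact ⟨fun y hy => (head?_rep hy : y = P.W) ▸ rfl, chain'_rep (Rr := Radj k) P.W rfl n⟩
    first
    | (obtain ⟨hc1, hc2⟩ := chain_core hk _ hts
        (by intro y hy; rw [List.head?_cons, Option.mem_some_iff] at hy; subst hy;
            exact Or.inr (Or.inl rfl)) m
       exact ⟨chain'_As hk, hc1, fun x hx y hy => As_last hk x hx y (hc2 y hy)⟩)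
    | (obtain ⟨hc1, hc2⟩ := chain_core hk _ htu
        (by intro y hy; rw [List.head?_cons, Option.mem_some_iff] at hy; subst hy;
            exact Or.inr (Or.inr rfl)) m
       exact ⟨chain'_As hk, hc1, fun x hx y hy => As_last hk x hx y (hc2 y hy)⟩) }

lemma first2 (hk : 2 ≤ k) : ∀ x, x ∈ LFirst (Ek k).matches' → x = P.A 0 ∨ x = P.V := by
  rintro x ⟨w, hw⟩
  replace hw := (mem_Ek _).mp hw
  have hAs : ∃ l, As k = P.A 0 :: l := by
    have h1 : k - 1 = (k - 2) + 1 := by omega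
    rw [As, h1, List.range_succ_eq_map, List.map_cons]
    exact ⟨_, rfl⟩
  obtain ⟨l, hl⟩ := hAs
  obtain ⟨m, n, hw | hw | hw⟩ := hw
  · rw [hl, List.cons_append, List.cons_append, List.cons.injEq] at hw; exact Or.inl hw.1
  · rw [hl, List.cons_append, List.cons_append, List.cons.injEq] at hw; exact Or.inl hw.1
  · rw [List.cons.injEq] at hw; exact Or.inr hw.1

lemma hR2 (hk : 2 ≤ k) : ∀ x y₁ y₂, Radj k x y₁ → Radj k x y₂ → y₁ ≠ y₂ →
    ¬ f y₁ <+: f y₂ := by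
  intro x y₁ y₂ h₁ h₂ hne
  cases x <;> simp only [Radj] at h₁ h₂
  case A i =>
    rcases h₁ with ⟨hlt, rfl⟩ | ⟨heq, h₁⟩
    · rcases h₂ with ⟨-, rfl⟩ | ⟨heq, -⟩
      · exact absurd rfl hne
      · omega
    · rcases h₂ with ⟨hlt, -⟩ | ⟨-, h₂⟩
      · omega
      · rcases h₁ with rfl | rfl | rfl <;> rcases h₂ with rfl | rfl | rfl <;>
          first | (exact absurd rfl hne) | decide
  case Q =>
    rcases h₁ with ⟨hk2, h₁⟩ | ⟨hk3, rfl⟩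
    · rcases h₂ with ⟨-, h₂⟩ | ⟨hk3, -⟩
      · rcases h₁ with rfl | rfl | rfl <;> rcases h₂ with rfl | rfl | rfl <;>
          first | (exact absurd rfl hne) | decide
      · omega
    · rcases h₂ with ⟨hk2, -⟩ | ⟨-, rfl⟩
      · omega
      · exact absurd rfl hne
  case R i =>
    rcases h₁ with ⟨hlt, rfl⟩ | ⟨heq, h₁⟩
    · rcases h₂ with ⟨-, rfl⟩ | ⟨heq, -⟩
      · exact absurd rfl hne
      · omega
    · rcases h₂ with ⟨hlt, -⟩ | ⟨-, h₂⟩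
      · omega
      · rcases h₁ with rfl | rfl | rfl <;> rcases h₂ with rfl | rfl | rfl <;>
          first | (exact absurd rfl hne) | decide
  all_goals first
    | exact absurd h₁ id
    | (subst h₁; subst h₂; exact absurd rfl hne)


variable {k : ℕ}

lemma fAs : ((As k).map f).flatten = List.replicate (k-1) AB.a := by
  rw [As, List.map_map]
  have : f ∘ P.A = fun _ => [AB.a] := by funext i; rfl
  rw [this, List.map_const', List.length_range, flatten_rep]

lemma fRs : ((Rs k).map f).flatten = List.replicate (k-2) AB.a := by
  rw [Rs, List.map_map]
  have : f ∘ P.R = fun _ => [AB.a] := by funext i; rfl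
  rw [this, List.map_const', List.length_range, flatten_rep]

lemma fcyc (hk : 2 ≤ k) : ((cyc k).map f).flatten = List.replicate k AB.a := by
  rw [cyc, List.map_cons, List.flatten_cons, fRs]
  have : k = (k - 2) + 1 + 1 := by omega
  rw [this, List.replicate_succ, List.replicate_succ]
  rfl

lemma fcycN (hk : 2 ≤ k) : ∀ m, ((cycN k m).map f).flatten = List.replicate (k*m) AB.a
  | 0 => by rw [Nat.mul_zero]; rfl
  | m+1 => by
    rw [cycN, List.map_append, List.flatten_append, fcyc hk, fcycN hk m,
      show k*(m+1) = k + k*m by ring, List.replicate_add]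

lemma fW {n : ℕ} : ((List.replicate n P.W).map f).flatten = List.replicate n AB.b := by
  rw [List.map_replicate]
  exact flatten_rep _ n

lemma keyU (hk : 2 ≤ k) (m n : ℕ) :
    ((As k ++ cycN k m ++ P.U :: List.replicate n P.W).map f).flatten
      = List.replicate (k*m) AB.a ++ List.replicate (k-1) AB.a ++ [AB.b, AB.b]
          ++ List.replicate n AB.b := by
  rw [List.map_append, List.map_append, List.flatten_append, List.flatten_append,
    List.map_cons, List.flatten_cons, fAs, fcycN hk, fW]
  rw [show List.replicate (k*m) AB.a ++ List.replicate (k-1) AB.a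
      = List.replicate (k-1) AB.a ++ List.replicate (k*m) AB.a by
    rw [← List.replicate_add, ← List.replicate_add, Nat.add_comm]]
  simp [f, List.append_assoc]

lemma keyST (hk : 2 ≤ k) (m n : ℕ) :
    ((As k ++ cycN k m ++ P.S :: P.T :: List.replicate n P.W).map f).flatten
      = List.replicate (k*(m+1)) AB.a ++ [AB.b, AB.a] ++ List.replicate n AB.b := by
  rw [List.map_append, List.map_append, List.flatten_append, List.flatten_append,
    List.map_cons, List.map_cons, List.flatten_cons, List.flatten_cons, fAs, fcycN hk, fW]
  rw [show k*(m+1) = (k-1) + (k*m + 1) by rw [Nat.mul_succ]; omega, List.replicate_add,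
    List.replicate_add]
  simp [f, List.append_assoc]
  rw [List.replicate_add, List.append_assoc]

lemma keyV (n : ℕ) :
    ((P.V :: List.replicate n P.W).map f).flatten
      = List.replicate (k*0) AB.a ++ [AB.b, AB.a] ++ List.replicate n AB.b := by
  rw [Nat.mul_zero, List.map_cons, List.flatten_cons, fW]
  rfl

lemma lang2 (hk : 2 ≤ k) :
    L0 k = {w | ∃ ws ∈ (Ek k).matches', (ws.map f).flatten = w} := by
  ext w
  simp only [L0, Set.mem_setOf_eq, mem_Ek]
  constructor
  · rintro ⟨m, n, rfl | rfl⟩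
    · exact ⟨As k ++ cycN k m ++ P.U :: List.replicate n P.W,
        ⟨m, n, Or.inr (Or.inl rfl)⟩, keyU hk m n⟩
    · cases m with
      | zero => exact ⟨P.V :: List.replicate n P.W, ⟨0, n, Or.inr (Or.inr rfl)⟩, keyV n⟩
      | succ m =>
        refine ⟨As k ++ cycN k m ++ P.S :: P.T :: List.replicate n P.W,
          ⟨m, n, Or.inl rfl⟩, ?_⟩
        rw [keyST hk m n]
        try simp [List.append_assoc]
  · rintro ⟨ws, ⟨m, n, rfl | rfl | rfl⟩, rfl⟩
    · exact ⟨m + 1, n, Or.inr (by rw [keyST hk m n]; try simp [List.append_assoc])⟩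
    · exact ⟨m, n, Or.inl (by rw [keyU hk m n]; try simp [List.append_assoc])⟩
    · exact ⟨0, n, Or.inr (by rw [keyV n]; try simp [List.append_assoc])⟩

lemma rchars_star {α : Type*} (p : RegularExpression α) : rchars p.star = rchars p := rfl
lemma rchars_char {α : Type*} (c : α) : rchars (char c) = [c] := rfl

lemma nodup2 (hk : 2 ≤ k) : (rchars (Ek k)).Nodup := by
  have hr : rchars (Ek k)
      = As k ++ (cyc k ++ [P.S, P.T, P.U, P.V, P.W]) := by
    simp [Ek, rchars_mul, rchars_add, rchars_catList, rchars_star, rchars_char,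
      List.append_assoc]
  rw [hr, cyc, Rs, As]
  have hA : Function.Injective P.A := fun i j h => by injection h
  have hRi : Function.Injective P.R := fun i j h => by injection h
  rw [List.nodup_append]
  refine ⟨List.nodup_range.map hA, ?_, ?_⟩
  · rw [List.cons_append, List.nodup_cons]
    refine ⟨by simp, ?_⟩
    rw [List.nodup_append]
    refine ⟨List.nodup_range.map hRi, by decide, ?_⟩
    intro x hx
    obtain ⟨i, -, rfl⟩ := List.mem_map.mp hx
    simp
  · intro x hx
    obtain ⟨i, -, rfl⟩ := List.mem_map.mp hx
    intro y hy
    cases y <;> simp_all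

theorem case2 (hk : 2 ≤ k) : IsKBlockDet (L0 k) 2 := by
  refine ⟨P, Ek k, f, nodup2 hk, ?_, lang2 hk⟩
  refine kBD_of (Radj k) {y | y = P.A 0 ∨ y = P.V} (chain2 hk) (first2 hk) ?_ (hR2 hk)
  rintro y₁ (rfl | rfl) y₂ (rfl | rfl) hne <;> first | exact absurd rfl hne | decide


/-- For every positive integer `k`, the language `L_k` of `([a^k])^*([a^{k-1}b]b + ba)b^*`
is `2`-block deterministic. -/
theorem stmt0 : ∀ k : ℕ, 1 ≤ k → IsKBlockDet (L0 k) 2 := by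
  intro k hk
  rcases Nat.lt_or_ge k 2 with h | h
  · have hk1 : k = 1 := by omega
    subst hk1
    exact case1
  · exact case2 h

end BD
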